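/- arXiv:1803.05502 — 2 statements merged into one kernel-verified Lean document; each statement's English description precedes it below -/
import Mathlib

section
/- Let $\varepsilon \in (0,1)$, $M_0 > 0$, $a > 0$, $w_0 \in \mathbb{R}$, and let $f : [0,\infty) \to \mathbb{R}$ be measurable with $|f(\tau)| \le M_0$ for almost every $\tau$. Then for every $t > 0$, $a^{1-\varepsilon} \Big| e^{-ta} w_0 + \int_0^t e^{-(t-\tau) a} f(\tau)\, d\tau \Big| \le \big( (1-\varepsilon)/e \big)^{1-\varepsilon} \big( t^{\varepsilon - 1} |w_0| + M_0 \, \varepsilon^{-1} t^{\varepsilon} \big)$. -/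
/-!
Everything rests on the elementary bound `x ^ p * e ^ (-x) ≤ (p / e) ^ p` for `x ≥ 0`, which is
`y e ^ (-y) ≤ e⁻¹` at `y = x / p` raised to the power `p`. With
`x = s a` and `p = 1 - ε` it gives `a ^ (1 - ε) e ^ (-s a) ≤ ((1 - ε) / e) ^ (1 - ε) s ^ (ε - 1)`,
uniformly in `a > 0`. At `s = t` this controls the free term; integrated over `s ∈ [0, t]`, where
`s ^ (ε - 1)` has integral `ε⁻¹ t ^ ε`, it controls the Duhamel term.
-/

open Real MeasureTheory intervalIntegral

theorem rpow_mul_exp_neg_le {p x : ℝ} (hp : 0 < p) (hx : 0 ≤ x) :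
    x ^ p * exp (-x) ≤ (p / exp 1) ^ p := by
  have hxp : x * exp (-(x / p)) ≤ p / exp 1 := by
    calc x * exp (-(x / p)) = p * (x / p * exp (-(x / p))) := by field_simp
      _ ≤ p * exp (-1) := by gcongr; exact mul_exp_neg_le_exp_neg_one _
      _ = p / exp 1 := by rw [exp_neg, div_eq_mul_inv]
  calc x ^ p * exp (-x) = (x * exp (-(x / p))) ^ p := by
        rw [mul_rpow hx (exp_pos _).le, ← exp_mul]
        field_simp
    _ ≤ (p / exp 1) ^ p := by gcongr

theorem rpow_mul_exp_neg_mul_le {ε a s : ℝ} (hε : ε < 1) (ha : 0 ≤ a) (hs : 0 < s) :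
    a ^ (1 - ε) * exp (-(s * a)) ≤ ((1 - ε) / exp 1) ^ (1 - ε) * s ^ (ε - 1) := by
  have hsε : 0 < s ^ (1 - ε) := rpow_pos_of_pos hs _
  rw [show ε - 1 = -(1 - ε) by ring, rpow_neg hs.le, ← div_eq_mul_inv, le_div_iff₀ hsε]
  calc a ^ (1 - ε) * exp (-(s * a)) * s ^ (1 - ε) = (s * a) ^ (1 - ε) * exp (-(s * a)) := by
        rw [mul_rpow hs.le ha]; ring
    _ ≤ ((1 - ε) / exp 1) ^ (1 - ε) := rpow_mul_exp_neg_le (by linarith) (by positivity)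

theorem rpow_mul_integral_exp_neg_mul_le {ε a t : ℝ} (hε₀ : 0 < ε) (hε₁ : ε < 1) (ha : 0 ≤ a)
    (ht : 0 ≤ t) :
    a ^ (1 - ε) * ∫ s in (0 : ℝ)..t, exp (-(s * a))
      ≤ ((1 - ε) / exp 1) ^ (1 - ε) * (ε⁻¹ * t ^ ε) := by
  set C := ((1 - ε) / exp 1) ^ (1 - ε)
  have h_ne_zero : ∀ᵐ s : ℝ, s ≠ 0 := by simp [ae_iff, measure_singleton]
  calc a ^ (1 - ε) * ∫ s in (0 : ℝ)..t, exp (-(s * a))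
      = ∫ s in (0 : ℝ)..t, a ^ (1 - ε) * exp (-(s * a)) := (intervalIntegral.integral_const_mul _ _).symm
    _ ≤ ∫ s in (0 : ℝ)..t, C * s ^ (ε - 1) := by
        refine integral_mono_ae_restrict ht (Continuous.intervalIntegrable (by fun_prop) _ _)
          ((intervalIntegrable_rpow' (by linarith)).const_mul C) ?_
        filter_upwards [ae_restrict_of_ae h_ne_zero, ae_restrict_mem measurableSet_Icc]
          with s hs₀ hs
        exact rpow_mul_exp_neg_mul_le hε₁ ha (hs.1.lt_of_ne' hs₀)
    _ = C * (ε⁻¹ * t ^ ε) := by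
        rw [intervalIntegral.integral_const_mul, integral_rpow (Or.inl (by linarith)), sub_add_cancel,
          zero_rpow hε₀.ne', sub_zero]
        field_simp

theorem abs_integral_exp_neg_mul_sub_mul_le {M a t : ℝ} {f : ℝ → ℝ} (ht : 0 ≤ t)
    (hf : ∀ᵐ τ, 0 ≤ τ → |f τ| ≤ M) :
    |∫ τ in (0 : ℝ)..t, exp (-((t - τ) * a)) * f τ| ≤ M * ∫ s in (0 : ℝ)..t, exp (-(s * a)) := by
  have h_flip : ∫ τ in (0 : ℝ)..t, exp (-((t - τ) * a)) = ∫ s in (0 : ℝ)..t, exp (-(s * a)) := by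
    simpa using integral_comp_sub_left (fun s => exp (-(s * a))) t (a := 0) (b := t)
  rw [← h_flip, ← intervalIntegral.integral_const_mul, ← Real.norm_eq_abs]
  refine norm_integral_le_of_norm_le ht ?_
    (Continuous.intervalIntegrable (by fun_prop : Continuous fun τ => M * exp (-((t - τ) * a))) _ _)
  filter_upwards [hf] with τ hτ hτt
  rw [norm_mul, norm_of_nonneg (exp_pos _).le, mul_comm M]
  exact mul_le_mul_of_nonneg_left (hτ hτt.1.le) (exp_pos _).le

theorem stmt9_general (ε M₀ a : ℝ) (hε : ε ∈ Set.Ioo (0:ℝ) 1) (hM₀ : 0 < M₀) (ha : 0 < a)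
    (w₀ : ℝ) (f : ℝ → ℝ)
    (hfb : ∀ᵐ τ ∂(volume : Measure ℝ), 0 ≤ τ → |f τ| ≤ M₀) :
    ∀ t : ℝ, 0 < t →
      a ^ (1 - ε) *
          |Real.exp (-(t * a)) * w₀ + ∫ τ in (0:ℝ)..t, Real.exp (-((t - τ) * a)) * f τ|
        ≤ ((1 - ε) / Real.exp 1) ^ (1 - ε)
            * (t ^ (ε - 1) * |w₀| + M₀ * ε⁻¹ * t ^ ε) := by
  intro t ht
  set C := ((1 - ε) / exp 1) ^ (1 - ε)
  have h_free : a ^ (1 - ε) * |exp (-(t * a)) * w₀| ≤ C * (t ^ (ε - 1) * |w₀|) := by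
    rw [abs_mul, abs_of_pos (exp_pos _), ← mul_assoc, ← mul_assoc]
    exact mul_le_mul_of_nonneg_right (rpow_mul_exp_neg_mul_le hε.2 ha.le ht) (abs_nonneg _)
  have h_duhamel : a ^ (1 - ε) * |∫ τ in (0:ℝ)..t, exp (-((t - τ) * a)) * f τ|
      ≤ C * (M₀ * ε⁻¹ * t ^ ε) := by
    calc _ ≤ a ^ (1 - ε) * (M₀ * ∫ s in (0 : ℝ)..t, exp (-(s * a))) :=
          mul_le_mul_of_nonneg_left (abs_integral_exp_neg_mul_sub_mul_le ht.le hfb) (by positivity)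
      _ = M₀ * (a ^ (1 - ε) * ∫ s in (0 : ℝ)..t, exp (-(s * a))) := by ring
      _ ≤ M₀ * (C * (ε⁻¹ * t ^ ε)) := mul_le_mul_of_nonneg_left
          (rpow_mul_integral_exp_neg_mul_le hε.1 hε.2 ha.le ht.le) hM₀.le
      _ = C * (M₀ * ε⁻¹ * t ^ ε) := by ring
  calc _ ≤ a ^ (1 - ε) * |exp (-(t * a)) * w₀|
        + a ^ (1 - ε) * |∫ τ in (0:ℝ)..t, exp (-((t - τ) * a)) * f τ| := by
        rw [← mul_add]; exact mul_le_mul_of_nonneg_left (abs_add_le _ _) (by positivity)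
    _ ≤ C * (t ^ (ε - 1) * |w₀|) + C * (M₀ * ε⁻¹ * t ^ ε) := add_le_add h_free h_duhamel
    _ = C * (t ^ (ε - 1) * |w₀| + M₀ * ε⁻¹ * t ^ ε) := by ring

/-- Scalar smoothing estimate: for `ε ∈ (0,1)`, `M₀ > 0`, `a > 0`, `w₀ ∈ ℝ`, and
measurable `f` with `|f τ| ≤ M₀` a.e., one has, for every `t > 0`,
`a^{1-ε} |e^{-t a} w₀ + ∫_0^t e^{-(t-τ) a} f τ dτ|
  ≤ ((1-ε)/e)^{1-ε} (t^{ε-1} |w₀| + M₀ ε⁻¹ t^ε)`. -/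
theorem stmt9 (ε M₀ a : ℝ) (hε : ε ∈ Set.Ioo (0:ℝ) 1) (hM₀ : 0 < M₀) (ha : 0 < a)
    (w₀ : ℝ) (f : ℝ → ℝ) (hf : Measurable f)
    (hfb : ∀ᵐ τ ∂(volume : Measure ℝ), 0 ≤ τ → |f τ| ≤ M₀) :
    ∀ t : ℝ, 0 < t →
      a ^ (1 - ε) *
          |Real.exp (-(t * a)) * w₀ + ∫ τ in (0:ℝ)..t, Real.exp (-((t - τ) * a)) * f τ|
        ≤ ((1 - ε) / Real.exp 1) ^ (1 - ε)
            * (t ^ (ε - 1) * |w₀| + M₀ * ε⁻¹ * t ^ ε) :=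
  stmt9_general ε M₀ a hε hM₀ ha w₀ f hfb
end

section
/- Let $\lambda > 0$, $a \ge 0$, $b \ge 0$, and let $T \in (0,\infty]$. Suppose $y : [0,T) \to [0,\infty)$ is absolutely continuous on compact subintervals, $y(0) \le a$, and $y'(t) + y(t) \le b (1+t)^{-2\lambda}$ for almost every $t \in (0,T)$. Then for all $t \in [0,T)$, $y(t) \le \big( a \, d_0(2\lambda, 1)\, e + b \, d_1(2\lambda, 1) \big) (1+t)^{-2\lambda}$, where $d_0(2\lambda,1) = (2\lambda/e)^{2\lambda}$ and $d_1(2\lambda,1) = 2^{2\lambda} \big[ ((2\lambda+1)/e)^{2\lambda+1} e + 1 \big]$. -/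
/-!
With the integrating factor `eᵗ`, the function `eᵗ y(t)` is absolutely continuous with derivative
`eᵗ (y' + y) ≤ b eᵗ (1 + t)^(-2λ)`, so `y t ≤ e^(-t) y 0 + b e^(-t) ∫₀ᵗ e^τ (1 + τ)^(-2λ) dτ`.
Both terms decay like `(1 + t)^(-2λ)`: the first because `x^α e^(-σx) ≤ d₀(α, σ)`, the second after
splitting the integral at `t / 2`; on `[0, t/2]` the factor `e^(τ - t)` is at most `e^(-t/2)`, on
`[t/2, t]` the weight is at most `(1 + t/2)^(-2λ) ≤ 2^(2λ) (1 + t)^(-2λ)`.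
-/

open Real MeasureTheory intervalIntegral Set

theorem exp_mul_sub_le_integral_exp_mul {y g f : ℝ → ℝ} {a b : ℝ} (hab : a ≤ b)
    (hg : IntervalIntegrable g volume a b) (hf : IntervalIntegrable f volume a b)
    (hy : ∀ x ∈ Icc a b, y x = y a + ∫ τ in a..x, g τ)
    (hle : ∀ᵐ x, x ∈ Ioo a b → g x + y x ≤ f x) :
    exp b * y b - exp a * y a ≤ ∫ x in a..b, exp x * f x := by
  set Y : ℝ → ℝ := fun x => y a + ∫ τ in a..x, g τ
  have hY : AbsolutelyContinuousOnInterval Y a b :=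
    contDiffOn_const.absolutelyContinuousOnInterval.add
      (hg.absolutelyContinuousOnInterval_intervalIntegral left_mem_uIcc)
  have hexp : AbsolutelyContinuousOnInterval exp a b :=
    contDiff_exp.contDiffOn.absolutelyContinuousOnInterval
  have hYy : ∀ x ∈ Icc a b, Y x = y x := fun x hx => (hy x hx).symm
  have hparts := hexp.integral_deriv_mul_eq_sub hY
  rw [hYy b (right_mem_Icc.2 hab), hYy a (left_mem_Icc.2 hab)] at hparts
  rw [← hparts]
  refine integral_mono_ae_restrict hab ?_ (hf.continuousOn_mul continuous_exp.continuousOn) ?_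
  · simp only [Real.deriv_exp]
    exact (continuous_exp.continuousOn.mul hY.continuousOn).intervalIntegrable.add
      (hY.intervalIntegrable_deriv.continuousOn_mul continuous_exp.continuousOn)
  · rw [Measure.restrict_congr_set Ioo_ae_eq_Icc.symm, Filter.EventuallyLE,
      ae_restrict_iff' measurableSet_Ioo]
    filter_upwards [hg.ae_hasDerivAt_integral, hle] with x hderiv hx_le hx
    have hYx : HasDerivAt Y (g x) x :=
      (hderiv (uIcc_of_le hab ▸ Ioo_subset_Icc_self hx) a left_mem_uIcc).const_add (y a)
    rw [Real.deriv_exp, hYx.deriv, hYy x (Ioo_subset_Icc_self hx)]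
    calc exp x * y x + exp x * g x = exp x * (g x + y x) := by ring
      _ ≤ exp x * f x := by gcongr; exact hx_le hx

theorem intervalIntegrable_one_add_rpow (s : ℝ) {u v : ℝ} (hu : -1 < u) (hv : -1 < v) :
    IntervalIntegrable (fun τ => (1 + τ) ^ s) volume u v := by
  refine ContinuousOn.intervalIntegrable (ContinuousOn.rpow_const (by fun_prop) fun x hx => ?_)
  have : min u v ≤ x := hx.1
  left
  linarith [lt_min hu hv]

theorem rpow_mul_exp_neg_mul_le_s10 {α σ x : ℝ} (hα : 0 ≤ α) (hσ : 0 < σ) (hx : 0 ≤ x) :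
    x ^ α * exp (-(σ * x)) ≤ (α / (exp 1 * σ)) ^ α := by
  rcases hα.eq_or_lt with rfl | hα
  · simpa using mul_nonneg hσ.le hx
  set u := σ * x / α with hu_def
  have hu : 0 ≤ u := by positivity
  have hxu : x = α / σ * u := by rw [hu_def]; field_simp
  have hexp : u ^ α ≤ exp (σ * x - α) := by
    calc u ^ α ≤ exp (u - 1) ^ α := by
          gcongr; linarith [add_one_le_exp (u - 1)]
      _ = exp (σ * x - α) := by
          rw [← exp_mul, hu_def]; congr 1; field_simp
  calc x ^ α * exp (-(σ * x)) = (α / σ) ^ α * u ^ α * exp (-(σ * x)) := by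
        rw [hxu, mul_rpow (by positivity) hu]
    _ ≤ (α / σ) ^ α * exp (σ * x - α) * exp (-(σ * x)) := by gcongr
    _ = (α / σ) ^ α * exp (-α) := by
        rw [mul_assoc, ← exp_add]; ring_nf
    _ = (α / (exp 1 * σ)) ^ α := by
        rw [mul_comm (exp 1), ← div_div, div_rpow (by positivity) (exp_pos 1).le, exp_one_rpow,
          exp_neg, ← div_eq_mul_inv]

theorem exp_neg_le_mul_one_add_rpow_neg {μ t : ℝ} (hμ : 0 ≤ μ) (ht : 0 ≤ t) :
    exp (-t) ≤ (μ / exp 1) ^ μ * exp 1 * (1 + t) ^ (-μ) := by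
  have hsup := rpow_mul_exp_neg_mul_le_s10 hμ one_pos (x := 1 + t) (by linarith)
  rw [one_mul, mul_one] at hsup
  rw [rpow_neg (by linarith), ← div_eq_mul_inv, le_div_iff₀ (by positivity)]
  have hexp : exp (-t) = exp 1 * exp (-(1 + t)) := by rw [← exp_add]; ring_nf
  calc exp (-t) * (1 + t) ^ μ = exp 1 * ((1 + t) ^ μ * exp (-(1 + t))) := by
        rw [hexp]; ring
    _ ≤ exp 1 * (μ / exp 1) ^ μ := by gcongr
    _ = (μ / exp 1) ^ μ * exp 1 := mul_comm _ _

theorem half_mul_exp_neg_half_le {μ t : ℝ} (hμ : 0 ≤ μ) (ht : 0 ≤ t) :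
    t / 2 * exp (-(t / 2)) ≤ 2 ^ μ * (((μ + 1) / exp 1) ^ (μ + 1) * exp 1) * (1 + t) ^ (-μ) := by
  have h1t : 0 < 1 + t := by linarith
  set K := ((μ + 1) / exp 1) ^ (μ + 1)
  set E := exp (-(1 / 2 * (1 + t)))
  have hsup : (1 + t) ^ (μ + 1) * E ≤ 2 ^ μ * 2 * K := by
    have := rpow_mul_exp_neg_mul_le_s10 (by linarith) (by norm_num : (0 : ℝ) < 1 / 2) h1t.le
      (α := μ + 1)
    rwa [show (μ + 1) / (exp 1 * (1 / 2)) = 2 * ((μ + 1) / exp 1) by ring,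
      mul_rpow (by norm_num) (by positivity), rpow_add_one two_ne_zero] at this
  have hsplit : (1 + t) ^ (μ + 1) * (1 + t) ^ (-μ) = 1 + t := by
    rw [← rpow_add h1t]; simp
  have hE : exp (-(t / 2)) = exp (1 / 2) * E := by rw [← exp_add]; ring_nf
  have hhalf : exp (1 / 2) ≤ exp 1 := exp_le_exp.2 (by norm_num)
  calc t / 2 * exp (-(t / 2))
      ≤ (1 + t) / 2 * exp (-(t / 2)) := by gcongr; linarith
    _ = (1 + t) ^ (-μ) * exp (1 / 2) / 2 * ((1 + t) ^ (μ + 1) * E) := by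
        rw [hE]; linear_combination (-(exp (1 / 2) * E / 2)) * hsplit
    _ ≤ (1 + t) ^ (-μ) * exp (1 / 2) / 2 * (2 ^ μ * 2 * K) := by gcongr
    _ = 2 ^ μ * (K * exp (1 / 2)) * (1 + t) ^ (-μ) := by ring
    _ ≤ 2 ^ μ * (K * exp 1) * (1 + t) ^ (-μ) := by gcongr

theorem one_add_half_rpow_neg_le {μ t : ℝ} (hμ : 0 ≤ μ) (ht : 0 ≤ t) :
    (1 + t / 2) ^ (-μ) ≤ 2 ^ μ * (1 + t) ^ (-μ) := by
  calc (1 + t / 2) ^ (-μ) ≤ ((1 + t) / 2) ^ (-μ) :=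
        rpow_le_rpow_of_nonpos (by linarith) (by linarith) (by linarith)
    _ = 2 ^ μ * (1 + t) ^ (-μ) := by
        rw [div_rpow (by linarith) zero_le_two, rpow_neg zero_le_two, div_inv_eq_mul, mul_comm]

theorem exp_neg_mul_integral_exp_mul_rpow_neg_le {μ t : ℝ} (hμ : 0 ≤ μ) (ht : 0 ≤ t) :
    exp (-t) * ∫ τ in 0..t, exp τ * (1 + τ) ^ (-μ)
      ≤ 2 ^ μ * (((μ + 1) / exp 1) ^ (μ + 1) * exp 1 + 1) * (1 + t) ^ (-μ) := by
  set F : ℝ → ℝ := fun τ => exp τ * (1 + τ) ^ (-μ)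
  have hF : ∀ u v, 0 ≤ u → 0 ≤ v → IntervalIntegrable F volume u v := fun u v hu hv =>
    (intervalIntegrable_one_add_rpow _ (by linarith) (by linarith)).continuousOn_mul
      continuous_exp.continuousOn
  have hleft : ∫ τ in 0..t / 2, F τ ≤ t / 2 * exp (t / 2) := by
    calc ∫ τ in 0..t / 2, F τ ≤ ∫ _ in 0..t / 2, exp (t / 2) := by
          refine integral_mono_on (by linarith) (hF _ _ le_rfl (by linarith))
            intervalIntegrable_const fun τ hτ => ?_
          have : (1 + τ) ^ (-μ) ≤ 1 :=
            rpow_le_one_of_one_le_of_nonpos (by linarith [hτ.1]) (by linarith)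
          calc exp τ * (1 + τ) ^ (-μ) ≤ exp τ * 1 := by gcongr
            _ ≤ exp (t / 2) := by rw [mul_one]; exact exp_le_exp.2 hτ.2
      _ = t / 2 * exp (t / 2) := by simp
  have hright : ∫ τ in t / 2..t, F τ ≤ (1 + t / 2) ^ (-μ) * exp t := by
    calc ∫ τ in t / 2..t, F τ ≤ ∫ τ in t / 2..t, (1 + t / 2) ^ (-μ) * exp τ := by
          refine integral_mono_on (by linarith) (hF _ _ (by linarith) (by linarith))
            ((continuous_const.mul continuous_exp).intervalIntegrable _ _) fun τ hτ => ?_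
          show exp τ * (1 + τ) ^ (-μ) ≤ _
          rw [mul_comm]
          exact mul_le_mul_of_nonneg_right
            (rpow_le_rpow_of_nonpos (by linarith) (by linarith [hτ.1]) (by linarith)) (exp_pos τ).le
      _ = (1 + t / 2) ^ (-μ) * (exp t - exp (t / 2)) := by
          rw [intervalIntegral.integral_const_mul, integral_exp]
      _ ≤ (1 + t / 2) ^ (-μ) * exp t := by
          gcongr; linarith [exp_pos (t / 2)]
  rw [← integral_add_adjacent_intervals (hF 0 (t / 2) le_rfl (by linarith))
    (hF (t / 2) t (by linarith) (by linarith))]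
  calc exp (-t) * ((∫ τ in 0..t / 2, F τ) + ∫ τ in t / 2..t, F τ)
      ≤ exp (-t) * (t / 2 * exp (t / 2) + (1 + t / 2) ^ (-μ) * exp t) := by gcongr
    _ = t / 2 * exp (-(t / 2)) + (1 + t / 2) ^ (-μ) := by
        have h1 : exp (-t) * exp (t / 2) = exp (-(t / 2)) := by rw [← exp_add]; ring_nf
        have h2 : exp (-t) * exp t = 1 := by rw [← exp_add]; simp
        linear_combination t / 2 * h1 + (1 + t / 2) ^ (-μ) * h2
    _ ≤ 2 ^ μ * (((μ + 1) / exp 1) ^ (μ + 1) * exp 1) * (1 + t) ^ (-μ) + 2 ^ μ * (1 + t) ^ (-μ) :=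
        add_le_add (half_mul_exp_neg_half_le hμ ht) (one_add_half_rpow_neg_le hμ ht)
    _ = 2 ^ μ * (((μ + 1) / exp 1) ^ (μ + 1) * exp 1 + 1) * (1 + t) ^ (-μ) := by ring

theorem stmt10_general (lam a b : ℝ) (hlam : 0 < lam) (ha : 0 ≤ a) (hb : 0 ≤ b)
    (T : ENNReal) (y g : ℝ → ℝ)
    (hAC : ∀ s t : ℝ, 0 ≤ s → s ≤ t → ENNReal.ofReal t < T →
      IntervalIntegrable g volume s t ∧ y t = y s + ∫ τ in s..t, g τ)
    (hy0 : y 0 ≤ a)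
    (hdiff : ∀ᵐ t ∂(volume : Measure ℝ), 0 < t → ENNReal.ofReal t < T →
      g t + y t ≤ b * (1 + t) ^ (-(2 * lam))) :
    ∀ t : ℝ, 0 ≤ t → ENNReal.ofReal t < T →
      y t ≤ (a * ((2 * lam / Real.exp 1) ^ (2 * lam) * Real.exp 1)
              + b * ((2:ℝ) ^ (2 * lam)
                  * (((2 * lam + 1) / Real.exp 1) ^ (2 * lam + 1) * Real.exp 1 + 1)))
            * (1 + t) ^ (-(2 * lam)) := by
  intro t ht htT
  have hμ : 0 ≤ 2 * lam := by positivity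
  have hlt : ∀ s ≤ t, ENNReal.ofReal s < T := fun s hs => (ENNReal.ofReal_le_ofReal hs).trans_lt htT
  have hcomp := exp_mul_sub_le_integral_exp_mul ht (hAC 0 t le_rfl ht htT).1
    ((intervalIntegrable_one_add_rpow _ (by norm_num) (by linarith)).const_mul b)
    (fun x hx => (hAC 0 x le_rfl hx.1 (hlt x hx.2)).2)
    (by filter_upwards [hdiff] with x hx hx' using hx hx'.1 (hlt x hx'.2.le))
  set I := ∫ τ in 0..t, exp τ * (1 + τ) ^ (-(2 * lam))
  have hduhamel : y t ≤ exp (-t) * y 0 + b * (exp (-t) * I) := by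
    have hint : ∫ x in 0..t, exp x * (b * (1 + x) ^ (-(2 * lam))) = b * I := by
      simp only [mul_left_comm _ b]
      exact integral_const_mul b _
    rw [hint, exp_zero, one_mul] at hcomp
    have he : exp (-t) * exp t = 1 := by rw [← exp_add]; simp
    linear_combination mul_le_mul_of_nonneg_left hcomp (exp_pos (-t)).le - y t * he
  calc y t ≤ exp (-t) * y 0 + b * (exp (-t) * I) := hduhamel
    _ ≤ exp (-t) * a + b * (exp (-t) * I) := by gcongr
    _ ≤ (2 * lam / exp 1) ^ (2 * lam) * exp 1 * (1 + t) ^ (-(2 * lam)) * a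
        + b * ((2:ℝ) ^ (2 * lam) * (((2 * lam + 1) / exp 1) ^ (2 * lam + 1) * exp 1 + 1)
          * (1 + t) ^ (-(2 * lam))) :=
        add_le_add (mul_le_mul_of_nonneg_right (exp_neg_le_mul_one_add_rpow_neg hμ ht) ha)
          (mul_le_mul_of_nonneg_left (exp_neg_mul_integral_exp_mul_rpow_neg_le hμ ht) hb)
    _ = _ := by ring

/-- Quantitative Gronwall step. Let `λ > 0`, `a ≥ 0`, `b ≥ 0`, `T ∈ (0,∞]`. Suppose
`y : [0,T) → [0,∞)` is absolutely continuous on compact subintervals (encoded by a locally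
integrable a.e.-derivative `g` with `y t = y s + ∫_s^t g`), `y 0 ≤ a`, and
`g t + y t ≤ b (1+t)^{-2λ}` for a.e. `t ∈ (0,T)`. Then for all `t ∈ [0,T)`,
`y t ≤ (a d₀(2λ,1) e + b d₁(2λ,1)) (1+t)^{-2λ}`, where `d₀(2λ,1) = (2λ/e)^{2λ}` and
`d₁(2λ,1) = 2^{2λ} [((2λ+1)/e)^{2λ+1} e + 1]`. -/
theorem stmt10 (lam a b : ℝ) (hlam : 0 < lam) (ha : 0 ≤ a) (hb : 0 ≤ b)
    (T : ENNReal) (hT : 0 < T) (y g : ℝ → ℝ)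
    (hy_nonneg : ∀ t : ℝ, 0 ≤ t → ENNReal.ofReal t < T → 0 ≤ y t)
    (hAC : ∀ s t : ℝ, 0 ≤ s → s ≤ t → ENNReal.ofReal t < T →
      IntervalIntegrable g volume s t ∧ y t = y s + ∫ τ in s..t, g τ)
    (hy0 : y 0 ≤ a)
    (hdiff : ∀ᵐ t ∂(volume : Measure ℝ), 0 < t → ENNReal.ofReal t < T →
      g t + y t ≤ b * (1 + t) ^ (-(2 * lam))) :
    ∀ t : ℝ, 0 ≤ t → ENNReal.ofReal t < T →
      y t ≤ (a * ((2 * lam / Real.exp 1) ^ (2 * lam) * Real.exp 1)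
              + b * ((2:ℝ) ^ (2 * lam)
                  * (((2 * lam + 1) / Real.exp 1) ^ (2 * lam + 1) * Real.exp 1 + 1)))
            * (1 + t) ^ (-(2 * lam)) :=
  stmt10_general lam a b hlam ha hb T y g hAC hy0 hdiff
end
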